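/- arXiv:2412.01614 — 2 statements merged into one kernel-verified Lean document; each statement's English description precedes it below -/
import Mathlib

section
/- Let G be a directed graph, s a vertex, and w a walk in G starting at s. For each prefix of w, consider the subgraph spanned by that prefix (its vertices and edges). Then the strongly connected components of the spanned subgraph are linearly ordered by the reachability relation: for any two distinct SCCs C and C', either every vertex of C' is reachable from every vertex of C, or vice versa. Moreover, the endpoint of the prefix lies in the last SCC in this linear order. -/
/-- A walk in a directed graph `G` starting at `s`, given by its length and the
sequence of visited vertices. -/
structure IWalk {V : Type*} (G : V → V → Prop) (s : V) where
  len : ℕ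
  f : ℕ → V
  source : f 0 = s
  adj : ∀ i < len, G (f i) (f (i + 1))

/-- For every prefix `w[:i]` of a walk `w` from `s`, the SCCs of the subgraph
spanned by the prefix are linearly ordered by reachability (equivalently,
reachability is total on the vertices of the spanned subgraph), and the endpoint
of the prefix lies in the last SCC (every spanned vertex reaches it). -/
theorem stmt1 {V : Type*} (G : V → V → Prop) (s : V) (w : IWalk G s)
    (i : ℕ) (hi : i ≤ w.len) :
    -- the subgraph spanned by the prefix w[:i]
    let Gi : V → V → Prop := fun a b => ∃ j < i, w.f j = a ∧ w.f (j + 1) = b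
    -- the vertices occurring in the prefix
    let occ : V → Prop := fun v => ∃ j ≤ i, w.f j = v
    (∀ u v : V, occ u → occ v →
      Relation.ReflTransGen Gi u v ∨ Relation.ReflTransGen Gi v u) ∧
    (∀ v : V, occ v → Relation.ReflTransGen Gi v (w.f i)) := by
  intro Gi occ
  have key : ∀ j k, j ≤ k → k ≤ i → Relation.ReflTransGen Gi (w.f j) (w.f k) := by
    intro j k hjk hki
    induction k, hjk using Nat.le_induction with
    | base => exact .refl
    | succ n hn ih =>
      exact (ih (Nat.le_of_succ_le hki)).tail ⟨n, Nat.lt_of_succ_le hki, rfl, rfl⟩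
  constructor
  · rintro u v ⟨j, hj, rfl⟩ ⟨k, hk, rfl⟩
    rcases le_total j k with h | h
    · exact Or.inl (key j k h hk)
    · exact Or.inr (key k j h hj)
  · rintro v ⟨j, hj, rfl⟩
    exact key j i hj le_rfl
end

section
/- Let G be a directed graph whose edge set is exactly the set of edges of a single walk w from s to t. If w visits every edge of G, then adding one edge to G (namely an edge whose endpoints already occur in w) yields a graph whose SCC quasi-order on the walk's spanned subgraph remains a linear order: specifically, adding an edge from the last SCC (in the reachability order) to some SCC C_j merges all SCCs from C_j onward into a single SCC, which becomes the new last SCC. -/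
/-- A walk in a directed graph `G` from `s` to `t`. -/
structure DWalk {V : Type*} (G : V → V → Prop) (s t : V) where
  len : ℕ
  f : ℕ → V
  source : f 0 = s
  target : f len = t
  adj : ∀ i < len, G (f i) (f (i + 1))

/-
Along a walk, earlier vertices reach later ones, so reachability is total on the vertices of
the walk, and it stays total after adding edges. If `a` is reachable from every vertex of the
walk, the new edge `a → b` lets every vertex reach `b`. Conversely a path that starts at `b`
and uses the new edge returns to `b` each time it does, so it can be cut after its last use of
that edge: whatever `b` reaches in the new graph it already reached in the old one.
-/

namespace DWalk

variable {V : Type*} {G : V → V → Prop} {s t : V}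

theorem reflTransGen_of_le (w : DWalk G s t) {i j : ℕ} (hij : i ≤ j) (hj : j ≤ w.len) :
    Relation.ReflTransGen G (w.f i) (w.f j) := by
  induction j, hij using Nat.le_induction with
  | base => exact .refl
  | succ n _ ih => exact (ih (Nat.le_of_succ_le hj)).tail (w.adj n hj)

theorem reflTransGen_total (w : DWalk G s t) {u v : V}
    (hu : ∃ i ≤ w.len, w.f i = u) (hv : ∃ j ≤ w.len, w.f j = v) :
    Relation.ReflTransGen G u v ∨ Relation.ReflTransGen G v u := by
  obtain ⟨i, hi, rfl⟩ := hu
  obtain ⟨j, hj, rfl⟩ := hv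
  rcases le_total i j with h | h
  · exact .inl (w.reflTransGen_of_le h hj)
  · exact .inr (w.reflTransGen_of_le h hi)

end DWalk

theorem Relation.ReflTransGen.of_addEdge_of_source_target {α : Type*} {r : α → α → Prop}
    {a b v : α} (h : ReflTransGen (fun x y => r x y ∨ (x = a ∧ y = b)) b v) :
    ReflTransGen r b v := by
  induction h with
  | refl => exact .refl
  | tail _ hxy ih =>
    rcases hxy with hxy | ⟨_, rfl⟩
    · exact ih.tail hxy
    · exact .refl

theorem stmt2_general {V : Type*} (G : V → V → Prop) (s t a b : V) (w : DWalk G s t)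
    (hlast : ∀ v, (∃ j ≤ w.len, w.f j = v) → Relation.ReflTransGen G v a) :
    let G' : V → V → Prop := fun x y => G x y ∨ (x = a ∧ y = b)
    let occ : V → Prop := fun v => ∃ j ≤ w.len, w.f j = v
    (∀ u v, occ u → occ v →
      Relation.ReflTransGen G' u v ∨ Relation.ReflTransGen G' v u) ∧
    (∀ v, occ v →
      ((Relation.ReflTransGen G' v b ∧ Relation.ReflTransGen G' b v) ↔
        Relation.ReflTransGen G b v)) ∧
    (∀ v, occ v → Relation.ReflTransGen G' v b) := by
  intro G' occ
  have lift : ∀ {x y}, Relation.ReflTransGen G x y → Relation.ReflTransGen G' x y :=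
    Relation.ReflTransGen.mono (fun _ _ => .inl) _ _
  have reach_b : ∀ v, occ v → Relation.ReflTransGen G' v b := fun v hv =>
    (lift (hlast v hv)).tail (.inr ⟨rfl, rfl⟩)
  refine ⟨fun u v hu hv => (w.reflTransGen_total hu hv).imp lift lift, fun v hv => ?_, reach_b⟩
  exact ⟨fun h => h.2.of_addEdge_of_source_target, fun h => ⟨reach_b v hv, lift h⟩⟩

/-- Let `G` be a directed graph whose edges are exactly the edges of an `st`-walk `w`
(so the SCCs of `G` are linearly ordered by reachability). Add a fresh edge from a
vertex `a` of the last SCC (i.e. a vertex reachable from every vertex of the walk) to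
a vertex `b` occurring on the walk. Then in the new graph `G'`: reachability remains
total on the vertices of the walk (the SCC order remains linear), the SCC of `b` in
`G'` consists exactly of the vertices reachable from `b` in `G` (all SCCs from that of
`b` onward are merged), and this merged SCC is the new last SCC (every vertex of the
walk reaches `b`). -/
theorem stmt2 {V : Type*} (G : V → V → Prop) (s t a b : V) (w : DWalk G s t)
    (hcov : ∀ x y, G x y ↔ ∃ i < w.len, w.f i = x ∧ w.f (i + 1) = y)
    (ha : ∃ j ≤ w.len, w.f j = a) (hb : ∃ j ≤ w.len, w.f j = b)
    (hlast : ∀ v, (∃ j ≤ w.len, w.f j = v) → Relation.ReflTransGen G v a) :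
    let G' : V → V → Prop := fun x y => G x y ∨ (x = a ∧ y = b)
    let occ : V → Prop := fun v => ∃ j ≤ w.len, w.f j = v
    (∀ u v, occ u → occ v →
      Relation.ReflTransGen G' u v ∨ Relation.ReflTransGen G' v u) ∧
    (∀ v, occ v →
      ((Relation.ReflTransGen G' v b ∧ Relation.ReflTransGen G' b v) ↔
        Relation.ReflTransGen G b v)) ∧
    (∀ v, occ v → Relation.ReflTransGen G' v b) :=
  stmt2_general G s t a b w hlast
end
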